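/- Assume the setup below, and let U ∈ ℝ^{d×d} be symmetric positive definite with U ≼ (1/L_Ω)I. Fix w_{t-1}, v_{t-1} ∈ ℝ^d and set w_t = prox_R^{U^{-1}}(w_{t-1} − U v_{t-1}). For each b-tuple ι = (i_1,…,i_b) ∈ {1,…,n}^b define v_t(ι) = (1/b)∑_{j=1}^b (∇f_{i_j}(w_t) − ∇f_{i_j}(w_{t-1}))/(q_{i_j} n) + v_{t-1} and w_{t+1}(ι) = prox_R^{U^{-1}}(w_t − U v_t(ι)). Then the expectation over ι drawn with i.i.d. coordinates from the distribution (q_1,…,q_n) satisfies ∑_{ι ∈ {1,…,n}^b} (∏_{j=1}^b q_{i_j}) · ‖w_{t+1}(ι) − w_t‖_{U^{-1}}² ≤ ‖w_t − w_{t-1}‖_{U^{-1}}². -/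

import Mathlib

/-!
Write `D = w_t - w_{t-1}` and `Δ(ι) = v_t(ι) - v_{t-1}`. The prox map of a convex `R` is firmly
nonexpansive in the `U⁻¹`-norm, so
`‖w_{t+1}(ι) - w_t‖²_{U⁻¹} ≤ ‖D - UΔ(ι)‖²_{U⁻¹} = ‖D‖²_{U⁻¹} - 2⟪D, Δ(ι)⟫ + ‖Δ(ι)‖²_U`.
Each summand `z_i = (∇f_i(w_t) - ∇f_i(w_{t-1})) / (q_i n)` of the average `Δ(ι)` satisfies
`‖z_i‖²_U ≤ 2⟪D, z_i⟫`, by `U ≼ L_Ω⁻¹ I` and the cocoercivity of `∇f_i`, and this condition is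
preserved under averaging since `‖·‖²_U` is convex. So the bound holds for every batch `ι`, not
only in expectation.
-/

open scoped BigOperators RealInnerProductSpace

/-- `ℝ^d` as Euclidean space. -/
abbrev Euc (d : ℕ) := EuclideanSpace ℝ (Fin d)

/-- Action of a `d × d` real matrix on a vector of `ℝ^d`. -/
noncomputable def mdot {d : ℕ} (M : Matrix (Fin d) (Fin d) ℝ) (x : Euc d) : Euc d :=
  Matrix.toEuclideanLin M x

/-- The quadratic form `‖x‖_M² = xᵀ M x` associated with a matrix `M`. -/
noncomputable def qf {d : ℕ} (M : Matrix (Fin d) (Fin d) ℝ) (x : Euc d) : ℝ :=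
  ⟪x, mdot M x⟫

/-- `u` is a point of the scaled proximal operator `prox_R^M (w)`, i.e. a minimizer of
`y ↦ (1/2)‖y - w‖_M² + R y`, for an extended-real-valued `R`. -/
def IsProxE {d : ℕ} (R : Euc d → EReal) (M : Matrix (Fin d) (Fin d) ℝ) (w u : Euc d) : Prop :=
  ∀ y, ((2⁻¹ * qf M (u - w) : ℝ) : EReal) + R u ≤ ((2⁻¹ * qf M (y - w) : ℝ) : EReal) + R y

/-- Convexity of an extended-real-valued function on `ℝ^d`. -/
def ERealConvexOn {d : ℕ} (R : Euc d → EReal) : Prop :=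
  ∀ x y : Euc d, ∀ a b : ℝ, 0 ≤ a → 0 ≤ b → a + b = 1 →
    R (a • x + b • y) ≤ (a : EReal) * R x + (b : EReal) * R y

/-- Properness of an extended-real-valued function: never `-∞`, and finite somewhere. -/
def ERealProper {d : ℕ} (R : Euc d → EReal) : Prop :=
  (∀ x, R x ≠ ⊥) ∧ (∃ x, R x ≠ ⊤)

/-- The average `F = (1/n) ∑ᵢ fᵢ`. -/
noncomputable def Favg {d n : ℕ} (f : Fin n → Euc d → ℝ) (x : Euc d) : ℝ :=
  (n : ℝ)⁻¹ * ∑ i, f i x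

/-- The averaged gradient `∇F = (1/n) ∑ᵢ ∇fᵢ`. -/
noncomputable def gAvg {d n : ℕ} (gf : Fin n → Euc d → Euc d) (x : Euc d) : Euc d :=
  (n : ℝ)⁻¹ • ∑ i, gf i x


section QuadraticForm

variable {d : ℕ} {M : Matrix (Fin d) (Fin d) ℝ}

lemma inner_mdot_comm (hM : M.IsHermitian) (x y : Euc d) : ⟪x, mdot M y⟫ = ⟪y, mdot M x⟫ := by
  rw [real_inner_comm]
  exact Matrix.isSymmetric_toEuclideanLin_iff.mpr hM y x

lemma qf_nonneg (hM : M.PosSemidef) (x : Euc d) : 0 ≤ qf M x := by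
  simpa [qf, mdot, Matrix.toLpLin_apply, PiLp.inner_apply, dotProduct, mul_comm]
    using hM.dotProduct_mulVec_nonneg (WithLp.equiv 2 _ x)

lemma qf_add (hM : M.IsHermitian) (x y : Euc d) :
    qf M (x + y) = qf M x + 2 * ⟪x, mdot M y⟫ + qf M y := by
  simp only [qf, mdot, map_add, inner_add_left, inner_add_right]
  rw [← mdot, ← mdot, inner_mdot_comm hM y x]
  ring

lemma qf_sub (hM : M.IsHermitian) (x y : Euc d) :
    qf M (x - y) = qf M x - 2 * ⟪x, mdot M y⟫ + qf M y := by
  simp only [qf, mdot, map_sub, inner_sub_left, inner_sub_right]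
  rw [← mdot, ← mdot, inner_mdot_comm hM y x]
  ring

lemma qf_smul (c : ℝ) (x : Euc d) : qf M (c • x) = c ^ 2 * qf M x := by
  simp only [qf, mdot, map_smul, inner_smul_left, inner_smul_right, conj_trivial]
  ring

lemma two_mul_inner_mdot_le (hM : M.PosSemidef) (x y : Euc d) :
    2 * ⟪x, mdot M y⟫ ≤ qf M x + qf M y := by
  have := qf_nonneg hM (x - y)
  rw [qf_sub hM.isHermitian] at this
  linarith

lemma convexOn_qf (hM : M.PosSemidef) : ConvexOn ℝ Set.univ (qf M) := by
  refine ⟨convex_univ, fun x _ y _ a b ha hb hab => ?_⟩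
  have hxy := qf_nonneg hM (x - y)
  rw [qf_sub hM.isHermitian] at hxy
  simp only [smul_eq_mul, qf_add hM.isHermitian, qf_smul, mdot, map_smul, inner_smul_left,
    inner_smul_right, conj_trivial]
  rw [← mdot]
  -- `a * qf M x + b * qf M y - qf M (a • x + b • y) = a * b * qf M (x - y)` when `a + b = 1`
  obtain rfl : b = 1 - a := by linarith
  nlinarith [mul_nonneg ha hb]

lemma qf_smul_one_sub (c : ℝ) (x : Euc d) :
    qf (c • (1 : Matrix (Fin d) (Fin d) ℝ) - M) x = c * ‖x‖ ^ 2 - qf M x := by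
  simp [qf, mdot, Matrix.toLpLin_apply, inner_sub_right, inner_smul_right]

lemma qf_inv_sub_mdot {U : Matrix (Fin d) (Fin d) ℝ} (hU : U.PosDef) (x y : Euc d) :
    qf U⁻¹ (x - mdot U y) = qf U⁻¹ x - 2 * ⟪x, y⟫ + qf U y := by
  have hinv : mdot U⁻¹ (mdot U y) = y := by
    simp [mdot, Matrix.toLpLin_apply, Matrix.mulVec_mulVec,
      Matrix.nonsing_inv_mul U ((Matrix.isUnit_iff_isUnit_det U).mp hU.isUnit)]
  rw [qf_sub hU.inv.isHermitian, hinv]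
  simp only [qf, hinv, real_inner_comm (mdot U y)]

lemma qf_inv_card_smul_sum_le_two_inner {ι : Type*} [Fintype ι] (hM : M.PosSemidef) (D : Euc d)
    (z : ι → Euc d) (hz : ∀ j, qf M (z j) ≤ 2 * ⟪D, z j⟫) :
    qf M ((Fintype.card ι : ℝ)⁻¹ • ∑ j, z j) ≤ 2 * ⟪D, (Fintype.card ι : ℝ)⁻¹ • ∑ j, z j⟫ := by
  rcases isEmpty_or_nonempty ι with _ | _
  · simp [qf]
  set w : ℝ := (Fintype.card ι : ℝ)⁻¹
  have hw : 0 ≤ w := by positivity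
  rw [Finset.smul_sum]
  calc qf M (∑ j, w • z j) ≤ ∑ j, w • qf M (z j) :=
        (convexOn_qf hM).map_sum_le (fun _ _ => hw) (by simp [w]) (fun _ _ => Set.mem_univ _)
    _ ≤ ∑ j, w • (2 * ⟪D, z j⟫) :=
        Finset.sum_le_sum fun j _ => smul_le_smul_of_nonneg_left (hz j) hw
    _ = 2 * ⟪D, ∑ j, w • z j⟫ := by
        simp only [inner_sum, inner_smul_right, smul_eq_mul, Finset.mul_sum, mul_left_comm]

end QuadraticForm

lemma pos_of_norm_sub_le_of_ne {E F : Type*} [SeminormedAddCommGroup E] [NormedAddCommGroup F]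
    {g : E → F} {L : ℝ} (hLip : ∀ x y, ‖g x - g y‖ ≤ L * ‖x - y‖) {x y : E} (hxy : g x ≠ g y) :
    0 < L := by
  have := hLip x y
  have : 0 < ‖g x - g y‖ := norm_pos_iff.mpr (sub_ne_zero.mpr hxy)
  nlinarith [norm_nonneg (x - y)]

section Gradient

variable {E : Type*} [NormedAddCommGroup E] [InnerProductSpace ℝ E] [CompleteSpace E]
  {f : E → ℝ} {g : E → E} {L : ℝ}

theorem ConvexOn.add_inner_le_of_hasGradientAt (hf : ConvexOn ℝ Set.univ f)
    (hg : ∀ x, HasGradientAt f (g x) x) (x y : E) : f x + ⟪g x, y - x⟫ ≤ f y := by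
  have hφ : ConvexOn ℝ Set.univ (f ∘ AffineMap.lineMap x y) :=
    hf.comp_affineMap (AffineMap.lineMap x y)
  have hd : HasDerivAt (f ∘ AffineMap.lineMap (k := ℝ) x y) ⟪g x, y - x⟫ 0 := by
    simpa using (hasGradientAt_iff_hasFDerivAt.mp (hg x)).comp_hasDerivAt_of_eq (0 : ℝ)
      AffineMap.hasDerivAt_lineMap (AffineMap.lineMap_apply_zero x y).symm
  have := hφ.le_slope_of_hasDerivAt (Set.mem_univ 0) (Set.mem_univ 1) one_pos hd
  simp [slope_def_field] at this
  linarith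

/- The sharp constant is `L / 2`; the mean value inequality gives `L`, which is all we need. -/
theorem le_add_inner_add_mul_norm_sq_of_hasGradientAt (hg : ∀ x, HasGradientAt f (g x) x)
    (hL : 0 ≤ L) (hLip : ∀ x y, ‖g x - g y‖ ≤ L * ‖x - y‖) (x y : E) :
    f y ≤ f x + ⟪g x, y - x⟫ + L * ‖y - x‖ ^ 2 := by
  have hmv : ‖f y - f x - InnerProductSpace.toDual ℝ E (g x) (y - x)‖ ≤ L * ‖y - x‖ * ‖y - x‖ := by
    refine (convex_segment x y).norm_image_sub_le_of_norm_hasFDerivWithin_le'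
      (fun z _ => (hasGradientAt_iff_hasFDerivAt.mp (hg z)).hasFDerivWithinAt)
      (fun z hz => ?_) (left_mem_segment ℝ x y) (right_mem_segment ℝ x y)
    rw [← map_sub, LinearIsometryEquiv.norm_map]
    exact (hLip z x).trans (mul_le_mul_of_nonneg_left (norm_sub_le_of_mem_segment hz) hL)
  rw [InnerProductSpace.toDual_apply_apply, Real.norm_eq_abs] at hmv
  nlinarith [le_abs_self (f y - f x - ⟪g x, y - x⟫)]

theorem ConvexOn.add_inner_add_norm_sub_sq_le (hf : ConvexOn ℝ Set.univ f)
    (hg : ∀ x, HasGradientAt f (g x) x) (hL : 0 < L)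
    (hLip : ∀ x y, ‖g x - g y‖ ≤ L * ‖x - y‖) (p w : E) :
    f p + ⟪g p, w - p⟫ + (4 * L)⁻¹ * ‖g w - g p‖ ^ 2 ≤ f w := by
  set δ := g w - g p
  -- compare the supporting hyperplane at `p` with the descent bound at `w` along `-δ`
  set z := w - (2 * L)⁻¹ • δ
  have hdesc := le_add_inner_add_mul_norm_sq_of_hasGradientAt hg hL.le hLip w z
  have hsupp := hf.add_inner_le_of_hasGradientAt hg p z
  have hzw : z - w = -((2 * L)⁻¹ • δ) := by simp [z]
  have hzp : z - p = (w - p) - (2 * L)⁻¹ • δ := by simp only [z]; abel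
  rw [hzw, norm_neg, norm_smul, inner_neg_right, inner_smul_right, Real.norm_eq_abs,
    abs_of_pos (by positivity)] at hdesc
  rw [hzp, inner_sub_right, inner_smul_right] at hsupp
  have hδ : ⟪g w, δ⟫ - ⟪g p, δ⟫ = ‖δ‖ ^ 2 := by
    rw [← inner_sub_left, real_inner_self_eq_norm_sq]
  have hL' : L ≠ 0 := hL.ne'
  field_simp at hdesc hsupp ⊢
  nlinarith [hδ]

theorem ConvexOn.norm_sub_sq_le_two_mul_inner (hf : ConvexOn ℝ Set.univ f)
    (hg : ∀ x, HasGradientAt f (g x) x) (hLip : ∀ x y, ‖g x - g y‖ ≤ L * ‖x - y‖) (x y : E) :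
    ‖g x - g y‖ ^ 2 ≤ 2 * L * ⟪g x - g y, x - y⟫ := by
  rcases eq_or_ne (g x) (g y) with hxy | hxy
  · simp [hxy]
  have hL := pos_of_norm_sub_le_of_ne hLip hxy
  have hxy' := hf.add_inner_add_norm_sub_sq_le hg hL hLip x y
  have hyx' := hf.add_inner_add_norm_sub_sq_le hg hL hLip y x
  rw [norm_sub_rev (g y)] at hxy'
  have : ⟪g x - g y, x - y⟫ = -(⟪g x, y - x⟫ + ⟪g y, x - y⟫) := by
    simp only [inner_sub_left, inner_sub_right]; ring
  rw [this]
  have h4 : 0 < 4 * L := by positivity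
  field_simp at hxy' hyx'
  nlinarith

end Gradient

lemma qf_inv_smul_sub_le_two_inner {d : ℕ} {f : Euc d → ℝ} {g : Euc d → Euc d}
    {U : Matrix (Fin d) (Fin d) ℝ} {L K s : ℝ} (hf : ConvexOn ℝ Set.univ f)
    (hg : ∀ x, HasGradientAt f (g x) x) (hLip : ∀ x y, ‖g x - g y‖ ≤ L * ‖x - y‖)
    (hU : ∀ v, qf U v ≤ K⁻¹ * ‖v‖ ^ 2) (hs : 0 < s) (hLK : L ≤ K * s) (x y : Euc d) :
    qf U (s⁻¹ • (g x - g y)) ≤ 2 * ⟪x - y, s⁻¹ • (g x - g y)⟫ := by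
  rcases eq_or_ne (g x) (g y) with hxy | hxy
  · simp [hxy, qf]
  have hL := pos_of_norm_sub_le_of_ne hLip hxy
  have hK : 0 < K := by nlinarith
  have hcoco := hf.norm_sub_sq_le_two_mul_inner hg hLip x y
  set δ := g x - g y
  have hinner : 0 ≤ ⟪δ, x - y⟫ := by nlinarith [sq_nonneg ‖δ‖]
  rw [qf_smul, inner_smul_right, real_inner_comm]
  calc s⁻¹ ^ 2 * qf U δ ≤ s⁻¹ ^ 2 * (K⁻¹ * (2 * L * ⟪δ, x - y⟫)) := by
        gcongr
        exact (hU δ).trans (by gcongr)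
    _ ≤ 2 * (s⁻¹ * ⟪δ, x - y⟫) := by
        field_simp
        nlinarith

lemma nonneg_of_forall_add_mul_nonneg {c Q : ℝ} (h : ∀ t : ℝ, 0 < t → t ≤ 1 → 0 ≤ c + t * Q) :
    0 ≤ c := by
  have hlim : Filter.Tendsto (fun t : ℝ => c + t * Q) (nhdsWithin 0 (Set.Ioi 0)) (nhds c) :=
    ((by fun_prop : Continuous fun t : ℝ => c + t * Q).tendsto' 0 c (by simp)).mono_left
      nhdsWithin_le_nhds
  exact ge_of_tendsto hlim <| by
    filter_upwards [Ioc_mem_nhdsGT one_pos] with t ht using h t ht.1 ht.2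

section Prox

variable {d : ℕ} {R : Euc d → EReal} {M : Matrix (Fin d) (Fin d) ℝ} {a u : Euc d}

lemma IsProxE.ne_top (hR : ERealProper R) (h : IsProxE R M a u) : R u ≠ ⊤ := by
  obtain ⟨y, hy⟩ := hR.2
  intro hu
  have := h y
  rw [hu, EReal.coe_add_top, top_le_iff, ← EReal.coe_toReal hy (hR.1 y), ← EReal.coe_add]
    at this
  exact EReal.coe_ne_top _ this

lemma IsProxE.inner_add_sub_nonneg (hR : ERealProper R) (hRc : ERealConvexOn R)
    (hM : M.PosSemidef) (h : IsProxE R M a u) {y : Euc d} (hy : R y ≠ ⊤) :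
    0 ≤ ⟪u - a, mdot M (y - u)⟫ + (R y).toReal - (R u).toReal := by
  have hRu : R u = ((R u).toReal : EReal) := (EReal.coe_toReal (h.ne_top hR) (hR.1 u)).symm
  have hRy : R y = ((R y).toReal : EReal) := (EReal.coe_toReal hy (hR.1 y)).symm
  refine nonneg_of_forall_add_mul_nonneg (Q := 2⁻¹ * qf M (y - u)) fun t ht0 ht1 => ?_
  have hmin := (h ((1 - t) • u + t • y)).trans
    (add_le_add_right (hRc u y (1 - t) t (by linarith) ht0.le (by ring)) _)
  have hseg : (1 - t) • u + t • y - a = (u - a) + t • (y - u) := by module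
  rw [hseg, hRu, hRy] at hmin
  norm_cast at hmin
  rw [qf_add hM.isHermitian, qf_smul, mdot, map_smul, ← mdot, inner_smul_right] at hmin
  nlinarith

lemma IsProxE.qf_sub_le (hR : ERealProper R) (hRc : ERealConvexOn R) (hM : M.PosSemidef)
    {a' u' : Euc d} (h : IsProxE R M a u) (h' : IsProxE R M a' u') :
    qf M (u - u') ≤ qf M (a - a') := by
  have h₁ := h.inner_add_sub_nonneg hR hRc hM (h'.ne_top hR)
  have h₂ := h'.inner_add_sub_nonneg hR hRc hM (h.ne_top hR)
  have hsum : ⟪u - a, mdot M (u' - u)⟫ + ⟪u' - a', mdot M (u - u')⟫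
      = ⟪a - a', mdot M (u - u')⟫ - qf M (u - u') := by
    rw [← neg_sub u u', mdot, map_neg, ← mdot, inner_neg_right, neg_add_eq_sub,
      ← inner_sub_left, show u' - a' - (u - a) = (a - a') - (u - u') by abel, inner_sub_left, qf]
  linarith [two_mul_inner_mdot_le hM (a - a') (u - u')]

lemma IsProxE.qf_inv_sub_le {U : Matrix (Fin d) (Fin d) ℝ} (hR : ERealProper R)
    (hRc : ERealConvexOn R) (hU : U.PosDef) {a' u' v v' : Euc d}
    (h : IsProxE R U⁻¹ (a - mdot U v) u) (h' : IsProxE R U⁻¹ (a' - mdot U v') u')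
    (hv : qf U (v - v') ≤ 2 * ⟪a - a', v - v'⟫) :
    qf U⁻¹ (u - u') ≤ qf U⁻¹ (a - a') :=
  calc qf U⁻¹ (u - u') ≤ qf U⁻¹ ((a - mdot U v) - (a' - mdot U v')) :=
        h.qf_sub_le hR hRc hU.inv.posSemidef h'
    _ = qf U⁻¹ ((a - a') - mdot U (v - v')) := by
        simp only [mdot, map_sub]
        congr 1
        abel
    _ = qf U⁻¹ (a - a') - 2 * ⟪a - a', v - v'⟫ + qf U (v - v') := qf_inv_sub_mdot hU _ _
    _ ≤ qf U⁻¹ (a - a') := by linarith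

end Prox

theorem prox_recursive_step_nonincreasing_general {d n b : ℕ}
    (f : Fin n → Euc d → ℝ) (gf : Fin n → Euc d → Euc d)
    (hgrad : ∀ i x, HasGradientAt (f i) (gf i x) x)
    (hconvf : ∀ i, ConvexOn ℝ Set.univ (f i))
    (L : Fin n → ℝ) (hLip : ∀ i x y, ‖gf i x - gf i y‖ ≤ L i * ‖x - y‖)
    (q : Fin n → ℝ) (hq : ∀ i, 0 < q i) (hqs : ∑ i, q i = 1)
    (LΩ : ℝ) (hLΩ : IsGreatest (Set.range fun i => L i / ((n : ℝ) * q i)) LΩ)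
    (R : Euc d → EReal) (hproper : ERealProper R)
    (hconvR : ERealConvexOn R)
    (U : Matrix (Fin d) (Fin d) ℝ) (hU : U.PosDef)
    (hUle : (LΩ⁻¹ • (1 : Matrix (Fin d) (Fin d) ℝ) - U).PosSemidef)
    (wprev vprev wt : Euc d) (hwt : IsProxE R U⁻¹ (wprev - mdot U vprev) wt)
    (wnext : (Fin b → Fin n) → Euc d)
    (hwnext : ∀ ι : Fin b → Fin n, IsProxE R U⁻¹
      (wt - mdot U ((b : ℝ)⁻¹ •
        ∑ j : Fin b, (q (ι j) * (n : ℝ))⁻¹ • (gf (ι j) wt - gf (ι j) wprev) + vprev))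
      (wnext ι)) :
    ∑ ι : Fin b → Fin n, (∏ j : Fin b, q (ι j)) * qf U⁻¹ (wnext ι - wt)
      ≤ qf U⁻¹ (wt - wprev) := by
  have hUnorm : ∀ v, qf U v ≤ LΩ⁻¹ * ‖v‖ ^ 2 := fun v => by
    linarith [qf_smul_one_sub (M := U) LΩ⁻¹ v ▸ qf_nonneg hUle v]
  have hincr : ∀ i, qf U ((q i * n)⁻¹ • (gf i wt - gf i wprev))
      ≤ 2 * ⟪wt - wprev, (q i * n)⁻¹ • (gf i wt - gf i wprev)⟫ := fun i => by
    have hs : 0 < q i * n := mul_pos (hq i) (Nat.cast_pos.mpr i.pos)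
    refine qf_inv_smul_sub_le_two_inner (hconvf i) (hgrad i) (hLip i) hUnorm hs ?_ wt wprev
    rw [mul_comm (q i)]
    exact (div_le_iff₀ (by rwa [mul_comm])).mp (hLΩ.2 ⟨i, rfl⟩)
  have hstep : ∀ ι, qf U⁻¹ (wnext ι - wt) ≤ qf U⁻¹ (wt - wprev) := fun ι =>
    (hwnext ι).qf_inv_sub_le hproper hconvR hU hwt <| by
      rw [add_sub_cancel_right]
      simpa using qf_inv_card_smul_sum_le_two_inner hU.posSemidef (wt - wprev) _
        fun j => hincr (ι j)
  calc ∑ ι : Fin b → Fin n, (∏ j, q (ι j)) * qf U⁻¹ (wnext ι - wt)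
      ≤ ∑ ι : Fin b → Fin n, (∏ j, q (ι j)) * qf U⁻¹ (wt - wprev) :=
        Finset.sum_le_sum fun ι _ => mul_le_mul_of_nonneg_left (hstep ι)
          (Finset.prod_nonneg fun j _ => (hq (ι j)).le)
    _ = qf U⁻¹ (wt - wprev) := by
        rw [← Finset.sum_mul, ← Fintype.sum_pow, hqs, one_pow, one_mul]

/-- with the finite-sum setup and `U ≼ (1/L_Ω)I` symmetric positive definite, if
`w_t = prox_R^{U⁻¹}(w_{t−1} − Uv_{t−1})` and, for each batch `ι ∈ {1,…,n}^b`,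
`v_t(ι) = (1/b)∑ⱼ (∇f_{ιⱼ}(w_t) − ∇f_{ιⱼ}(w_{t−1}))/(q_{ιⱼ} n) + v_{t−1}` and
`w_{t+1}(ι) = prox_R^{U⁻¹}(w_t − Uv_t(ι))`, then
`E_ι ‖w_{t+1}(ι) − w_t‖_{U⁻¹}² ≤ ‖w_t − w_{t−1}‖_{U⁻¹}²`. -/
theorem prox_recursive_step_nonincreasing {d n b : ℕ} (hn : 0 < n) (hb : 1 ≤ b) (hbn : b ≤ n)
    (f : Fin n → Euc d → ℝ) (gf : Fin n → Euc d → Euc d)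
    (hgrad : ∀ i x, HasGradientAt (f i) (gf i x) x)
    (hconvf : ∀ i, ConvexOn ℝ Set.univ (f i))
    (L : Fin n → ℝ) (hLip : ∀ i x y, ‖gf i x - gf i y‖ ≤ L i * ‖x - y‖)
    (q : Fin n → ℝ) (hq : ∀ i, 0 < q i) (hqs : ∑ i, q i = 1)
    (LΩ : ℝ) (hLΩ : IsGreatest (Set.range fun i => L i / ((n : ℝ) * q i)) LΩ)
    (R : Euc d → EReal) (hproper : ERealProper R) (hlsc : LowerSemicontinuous R)
    (hconvR : ERealConvexOn R)
    (U : Matrix (Fin d) (Fin d) ℝ) (hU : U.PosDef)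
    (hUle : (LΩ⁻¹ • (1 : Matrix (Fin d) (Fin d) ℝ) - U).PosSemidef)
    (wprev vprev wt : Euc d) (hwt : IsProxE R U⁻¹ (wprev - mdot U vprev) wt)
    (wnext : (Fin b → Fin n) → Euc d)
    (hwnext : ∀ ι : Fin b → Fin n, IsProxE R U⁻¹
      (wt - mdot U ((b : ℝ)⁻¹ •
        ∑ j : Fin b, (q (ι j) * (n : ℝ))⁻¹ • (gf (ι j) wt - gf (ι j) wprev) + vprev))
      (wnext ι)) :
    ∑ ι : Fin b → Fin n, (∏ j : Fin b, q (ι j)) * qf U⁻¹ (wnext ι - wt)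
      ≤ qf U⁻¹ (wt - wprev) :=
  prox_recursive_step_nonincreasing_general f gf hgrad hconvf L hLip q hq hqs LΩ hLΩ R hproper
    hconvR U hU hUle wprev vprev wt hwt wnext hwnext
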